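/- Let A be an n×n real matrix with nonzero rows a₁ᵀ,…,aₙᵀ and ker A = 0. Let G be a connected undirected simple graph on n vertices with Laplacian L, let Pᵢ = I − aᵢaᵢᵀ/(aᵢᵀaᵢ), P = diag(P₁,…,Pₙ), and L̄ = L ⊗ Iₙ. Then the symmetric matrix P L̄ P + I − P is positive definite; that is, it is positive semidefinite (as the sum of the positive semidefinite matrices P L̄ P and I − P) and nonsingular: if P L̄ P α + (I − P)α = 0 for α ∈ ℝ^{n²}, then α = 0. -/

import Mathlib

open Matrix
open scoped Kronecker

/-- The orthogonal projection `Pᵢ = I - aᵢaᵢᵀ/(aᵢᵀaᵢ)` onto the hyperplane `{z : aᵢᵀz = 0}`. -/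
noncomputable def projMat {n : ℕ} (a : Fin n → ℝ) : Matrix (Fin n) (Fin n) ℝ :=
  1 - (a ⬝ᵥ a)⁻¹ • vecMulVec a a

/-- The block-diagonal matrix `P = diag(P₁,…,Pₘ)`, acting on `(ℝⁿ)ᵐ ≅ ℝ^{mn}`
(indexed by pairs `(block, coordinate)`). -/
noncomputable def blockP {m n : ℕ} (a : Fin m → Fin n → ℝ) :
    Matrix (Fin m × Fin n) (Fin m × Fin n) ℝ :=
  Matrix.of fun p q => if p.1 = q.1 then projMat (a p.1) p.2 q.2 else 0

/-!
`P` is an orthogonal projection and `L̄ = L ⊗ I` is positive semidefinite, so `P L̄ P` and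
`I - P` are positive semidefinite and the quadratic form of their sum vanishes at `α` only if
`Pα = α` and `L̄α = 0`. Split `α` into blocks `αᵢ ∈ ℝⁿ`, one per vertex. For each coordinate `j`,
`L̄α = 0` puts `i ↦ (αᵢ)ⱼ` in `ker L`, which by connectedness consists of the constant vectors; so
all blocks equal one vector `y`. Then `Pα = α` says `aᵢᵀ y = 0` for every `i`, i.e. `A y = 0`,
whence `y = 0`.
-/

namespace Matrix

theorem blockDiagonal_mulVec_apply {m n o α : Type*} [Fintype n] [Fintype o] [DecidableEq o]
    [NonUnitalNonAssocSemiring α] (M : o → Matrix m n α) (x : n × o → α) (i : m) (k : o) :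
    (blockDiagonal M *ᵥ x) (i, k) = (M k *ᵥ fun j => x (j, k)) i := by
  simp [mulVec, dotProduct, blockDiagonal_apply, Fintype.sum_prod_type_right]

theorem kronecker_one_mulVec_apply {l m n α : Type*} [Fintype m] [Fintype n] [DecidableEq n]
    [NonAssocSemiring α] (L : Matrix l m α) (x : m × n → α) (i : l) (j : n) :
    ((L ⊗ₖ (1 : Matrix n n α)) *ᵥ x) (i, j) = (L *ᵥ fun k => x (k, j)) i := by
  rw [kronecker_one, blockDiagonal_mulVec_apply]

section Projection

variable {ι 𝕜 : Type*} [Fintype ι] [RCLike 𝕜] {P M : Matrix ι ι 𝕜}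

open scoped ComplexOrder

theorem posSemidef_mul_mul_of_isHermitian (hP : P.IsHermitian) (hM : M.PosSemidef) :
    (P * M * P).PosSemidef := by
  simpa only [hP.eq] using hM.conjTranspose_mul_mul_same P

variable [DecidableEq ι]

theorem posSemidef_one_sub_of_isHermitian_of_mul_self (hP : P.IsHermitian) (hPP : P * P = P) :
    (1 - P).PosSemidef := by
  have h : (1 - P)ᴴ * (1 - P) = 1 - P := by
    rw [conjTranspose_sub, conjTranspose_one, hP.eq]
    simp only [sub_mul, mul_sub, one_mul, mul_one, hPP, sub_self, sub_zero]
  rw [← h]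
  exact posSemidef_conjTranspose_mul_self (1 - P)

theorem posDef_mul_mul_add_one_sub (hP : P.IsHermitian) (hPP : P * P = P) (hM : M.PosSemidef)
    (hker : ∀ x, P *ᵥ x = x → M *ᵥ x = 0 → x = 0) : (P * M * P + (1 - P)).PosDef := by
  have hPMP : (P * M * P).PosSemidef := posSemidef_mul_mul_of_isHermitian hP hM
  have hQ : (1 - P).PosSemidef := posSemidef_one_sub_of_isHermitian_of_mul_self hP hPP
  refine .of_dotProduct_mulVec_pos (hPMP.add hQ).isHermitian fun x hx => ?_
  refine (hPMP.add hQ).dotProduct_mulVec_nonneg x |>.lt_of_ne fun h0 => hx ?_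
  rw [add_mulVec, dotProduct_add, eq_comm, add_eq_zero_iff_of_nonneg
    (hPMP.dotProduct_mulVec_nonneg x) (hQ.dotProduct_mulVec_nonneg x)] at h0
  have hPx : P *ᵥ x = x := by
    have h1P := (hQ.dotProduct_mulVec_zero_iff x).mp h0.2
    rwa [sub_mulVec, one_mulVec, sub_eq_zero, eq_comm] at h1P
  have hxP : star x ᵥ* P = star x := by
    rw [← hP.eq, ← star_mulVec, hPx]
  refine hker x hPx ((hM.dotProduct_mulVec_zero_iff x).mp ?_)
  rw [← h0.1, ← mulVec_mulVec, hPx, ← mulVec_mulVec, dotProduct_mulVec (star x) P, hxP]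

end Projection

end Matrix

theorem SimpleGraph.Connected.eq_of_lapMatrix_kronecker_one_mulVec_eq_zero {V n : Type*}
    [Fintype V] [DecidableEq V] [Fintype n] [DecidableEq n] {G : SimpleGraph V} [DecidableRel G.Adj]
    (hG : G.Connected) {x : V × n → ℝ} (hx : (G.lapMatrix ℝ ⊗ₖ (1 : Matrix n n ℝ)) *ᵥ x = 0)
    (i k : V) (j : n) : x (i, j) = x (k, j) := by
  have hcol : G.lapMatrix ℝ *ᵥ (fun v => x (v, j)) = 0 :=
    funext fun v => by rw [← kronecker_one_mulVec_apply, hx, Pi.zero_apply, Pi.zero_apply]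
  exact (G.lapMatrix_mulVec_eq_zero_iff_forall_reachable.mp hcol) i k (hG.preconnected i k)

section HyperplaneProjection

variable {n : ℕ}

theorem projMat_isHermitian (a : Fin n → ℝ) : (projMat a).IsHermitian := by
  rw [IsHermitian, projMat, conjTranspose_sub, conjTranspose_one, conjTranspose_smul,
    conjTranspose_vecMulVec, star_trivial, star_trivial]

theorem projMat_mul_self (a : Fin n → ℝ) : projMat a * projMat a = projMat a := by
  have hV : vecMulVec a a * vecMulVec a a = (a ⬝ᵥ a) • vecMulVec a a := by
    rw [vecMulVec_mul_vecMulVec, vecMulVec_smul]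
  -- holds for `a ⬝ᵥ a = 0` too, as `0⁻¹ = 0`
  have hc : (a ⬝ᵥ a)⁻¹ * (a ⬝ᵥ a)⁻¹ * (a ⬝ᵥ a) = (a ⬝ᵥ a)⁻¹ := by
    simpa only [inv_inv, mul_right_comm] using mul_inv_mul_cancel (a ⬝ᵥ a)⁻¹
  rw [projMat, sub_mul, mul_sub, mul_sub, one_mul, one_mul, mul_one, smul_mul_smul_comm, hV,
    smul_smul, hc]
  abel

theorem projMat_mulVec (a w : Fin n → ℝ) :
    projMat a *ᵥ w = w - ((a ⬝ᵥ a)⁻¹ * (a ⬝ᵥ w)) • a := by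
  rw [projMat, sub_mulVec, one_mulVec, smul_mulVec, vecMulVec_mulVec, op_smul_eq_smul, smul_smul]

theorem dotProduct_eq_zero_of_projMat_mulVec_eq_self {a w : Fin n → ℝ} (ha : a ≠ 0)
    (h : projMat a *ᵥ w = w) : a ⬝ᵥ w = 0 := by
  rw [projMat_mulVec, sub_eq_self, smul_eq_zero, mul_eq_zero, inv_eq_zero,
    dotProduct_self_eq_zero] at h
  tauto

end HyperplaneProjection

section BlockProjection

variable {m n : ℕ}

theorem blockP_eq_submatrix_blockDiagonal (a : Fin m → Fin n → ℝ) :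
    blockP a = (blockDiagonal fun i => projMat (a i)).submatrix Prod.swap Prod.swap := by
  ext ⟨i, j⟩ ⟨k, l⟩
  simp [blockP, blockDiagonal_apply]

theorem blockP_isHermitian (a : Fin m → Fin n → ℝ) : (blockP a).IsHermitian := by
  rw [blockP_eq_submatrix_blockDiagonal]
  exact (isHermitian_blockDiagonal_iff.mpr fun i => projMat_isHermitian (a i)).submatrix _

theorem blockP_mul_self (a : Fin m → Fin n → ℝ) : blockP a * blockP a = blockP a := by
  simp only [blockP_eq_submatrix_blockDiagonal, ← Equiv.coe_prodComm, submatrix_mul_equiv,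
    ← blockDiagonal_mul, projMat_mul_self]

theorem blockP_mulVec_apply (a : Fin m → Fin n → ℝ) (x : Fin m × Fin n → ℝ) (i : Fin m)
    (j : Fin n) : (blockP a *ᵥ x) (i, j) = (projMat (a i) *ᵥ fun l => x (i, l)) j := by
  rw [blockP_eq_submatrix_blockDiagonal, ← Equiv.coe_prodComm, submatrix_mulVec_equiv]
  exact blockDiagonal_mulVec_apply _ _ j i

theorem eq_zero_of_blockP_mulVec_eq_self {A : Matrix (Fin m) (Fin n) ℝ} (hrows : ∀ i, A i ≠ 0)
    (hker : ∀ y, A *ᵥ y = 0 → y = 0) {x : Fin m × Fin n → ℝ} (hPx : blockP A *ᵥ x = x)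
    (hx : ∀ i k j, x (i, j) = x (k, j)) : x = 0 := by
  ext ⟨i, j⟩
  have hrow (k : Fin m) : projMat (A k) *ᵥ (fun l => x (k, l)) = fun l => x (k, l) :=
    funext fun l => by rw [← blockP_mulVec_apply A x k l, hPx]
  have hAx : A *ᵥ (fun l => x (i, l)) = 0 := funext fun k => by
    show A k ⬝ᵥ _ = 0
    simpa only [hx k i] using dotProduct_eq_zero_of_projMat_mulVec_eq_self (hrows k) (hrow k)
  exact congrFun (hker _ hAx) j

end BlockProjection

/-- If `A` has nonzero rows and trivial kernel and `G` is connected, then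
`P L̄ P + I - P` is positive definite: it is positive semidefinite (being the sum of the
positive semidefinite matrices `P L̄ P` and `I - P`) and nonsingular. -/
theorem PLP_posdef
    {n : ℕ} (A : Matrix (Fin n) (Fin n) ℝ)
    (hrows : ∀ i, A i ≠ 0)
    (hker : ∀ x : Fin n → ℝ, A *ᵥ x = 0 → x = 0)
    (G : SimpleGraph (Fin n)) [DecidableRel G.Adj] (hG : G.Connected)
    (P Lbar : Matrix (Fin n × Fin n) (Fin n × Fin n) ℝ)
    (hP : P = blockP (fun i => A i))
    (hL : Lbar = G.lapMatrix ℝ ⊗ₖ (1 : Matrix (Fin n) (Fin n) ℝ)) :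
    (P * Lbar * P + 1 - P).PosDef ∧
    (P * Lbar * P).PosSemidef ∧ (1 - P).PosSemidef ∧ (P * Lbar * P + 1 - P).PosSemidef ∧
    (∀ α : Fin n × Fin n → ℝ, (P * Lbar * P + (1 - P)) *ᵥ α = 0 → α = 0) := by
  subst hP hL
  have hLbar : (G.lapMatrix ℝ ⊗ₖ (1 : Matrix (Fin n) (Fin n) ℝ)).PosSemidef :=
    (SimpleGraph.posSemidef_lapMatrix ℝ G).kronecker .one
  have hPd := posDef_mul_mul_add_one_sub (blockP_isHermitian A) (blockP_mul_self A) hLbar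
    fun _ hPx hLx => eq_zero_of_blockP_mulVec_eq_self hrows hker hPx
      (hG.eq_of_lapMatrix_kronecker_one_mulVec_eq_zero hLx)
  rw [add_sub_assoc]
  refine ⟨hPd, posSemidef_mul_mul_of_isHermitian (blockP_isHermitian A) hLbar,
    posSemidef_one_sub_of_isHermitian_of_mul_self (blockP_isHermitian A) (blockP_mul_self A),
    hPd.posSemidef, fun α hα => ?_⟩
  by_contra hα0
  exact (hPd.dotProduct_mulVec_pos hα0).ne' (by rw [hα, dotProduct_zero])
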